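/- Let ⟨S, F⟩ be an F-system. A subset A ⊆ S is a maximal (with respect to set inclusion among local conglomerates) local conglomerate if and only if the pair (A, F→(A) ∪ F←(A)) is a consistent fixed point of φ that is maximal with respect to ≤ among consistent fixed points of φ. -/
import Mathlib


/-- Truth labels: True, False, Undetermined. -/
inductive Label where
  | T : Label
  | F : Label
  | U : Label
  deriving DecidableEq

variable {S : Type*}

/-- F→(x): the sentences whose falsity x affirms. -/
def FOut (F : S → S → Prop) (x : S) : Set S := {y | F x y}

/-- F←(x): the sentences affirming the falsity of x. -/
def FIn (F : S → S → Prop) (x : S) : Set S := {y | F y x}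

/-- F→(A). -/
def FOutSet (F : S → S → Prop) (A : Set S) : Set S := ⋃ x ∈ A, FOut F x

/-- F←(A). -/
def FInSet (F : S → S → Prop) (A : Set S) : Set S := ⋃ x ∈ A, FIn F x

/-- A sink is a node with no outgoing edges. -/
def IsSink (F : S → S → Prop) (x : S) : Prop := FOut F x = ∅

/-- sinks(A): the sinks belonging to A. -/
def sinks (F : S → S → Prop) (A : Set S) : Set S := {x ∈ A | IsSink F x}

/-- A labelling: for every non-sink x, L x = F iff some z ∈ F→(x) has L z = T,
and L x = T iff every z ∈ F→(x) has L z = F. -/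
def IsLabelling (F : S → S → Prop) (L : S → Label) : Prop :=
  ∀ x, ¬ IsSink F x →
    ((L x = Label.F ↔ ∃ z ∈ FOut F x, L z = Label.T) ∧
     (L x = Label.T ↔ ∀ z ∈ FOut F x, L z = Label.F))

/-- A labelling is classical iff no sentence gets the label U. -/
def IsClassical (L : S → Label) : Prop := ∀ x, L x ≠ Label.U

/-- A conglomerate: (1) F←(A) ⊆ S \ A, (2) (S \ A) \ sinks(S) ⊆ F←(A). -/
def Conglomerate (F : S → S → Prop) (A : Set S) : Prop :=
  FInSet F A ⊆ Aᶜ ∧ Aᶜ \ sinks F Set.univ ⊆ FInSet F A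

/-- A local conglomerate: (1) F←(A) ⊆ S \ A, (2) F→(A) \ sinks(S) ⊆ F←(A). -/
def LocalConglomerate (F : S → S → Prop) (A : Set S) : Prop :=
  FInSet F A ⊆ Aᶜ ∧ FOutSet F A \ sinks F Set.univ ⊆ FInSet F A

/-- The operator φ on pairs of subsets of S. -/
def phi (F : S → S → Prop) (p : Set S × Set S) : Set S × Set S :=
  (sinks F p.1 ∪ {x | FOut F x ≠ ∅ ∧ FOut F x ⊆ p.2},
   sinks F p.2 ∪ {x | FOut F x ∩ p.1 ≠ ∅})

/-- The order on pairs: componentwise inclusion. -/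
def PairLe (p q : Set S × Set S) : Prop := p.1 ⊆ q.1 ∧ p.2 ⊆ q.2

/-- An F-system is paradoxical iff it has no classical labelling. -/
def IsParadoxical (F : S → S → Prop) : Prop :=
  ¬ ∃ L : S → Label, IsLabelling F L ∧ IsClassical L

/-- x is a referential contradiction iff every classical labelling labels it F. -/
def RefContradiction (F : S → S → Prop) (x : S) : Prop :=
  ∀ L : S → Label, IsLabelling F L → IsClassical L → L x = Label.F

/-- x is a referential tautology iff every classical labelling labels it T. -/
def RefTautology (F : S → S → Prop) (x : S) : Prop :=
  ∀ L : S → Label, IsLabelling F L → IsClassical L → L x = Label.T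

section Aux

variable {F : S → S → Prop}

lemma mem_FOutSet' {A : Set S} {y : S} : y ∈ FOutSet F A ↔ ∃ x ∈ A, F x y := by
  simp [FOutSet, FOut]

lemma mem_FInSet' {A : Set S} {y : S} : y ∈ FInSet F A ↔ ∃ x ∈ A, F y x := by
  simp [FInSet, FIn]

lemma mem_sinks' {A : Set S} {y : S} : y ∈ sinks F A ↔ y ∈ A ∧ IsSink F y := Iff.rfl

lemma not_isSink_iff {x : S} : ¬ IsSink F x ↔ ∃ y, F x y := by
  simp [IsSink, FOut, Set.eq_empty_iff_forall_notMem]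

lemma IsSink.not_rel {x y : S} (h : IsSink F x) : ¬ F x y := by
  intro hxy
  exact not_isSink_iff.mpr ⟨y, hxy⟩ h

/-- A local conglomerate is disjoint from F→(A) ∪ F←(A). -/
lemma lc_disjoint {A : Set S} (h : LocalConglomerate F A) :
    A ∩ (FOutSet F A ∪ FInSet F A) = ∅ := by
  ext y
  simp only [Set.mem_inter_iff, Set.mem_union, Set.mem_empty_iff_false, iff_false, not_and]
  rintro hyA (hout | hin)
  · obtain ⟨x, hxA, hxy⟩ := mem_FOutSet'.mp hout
    exact h.1 (mem_FInSet'.mpr ⟨y, hyA, hxy⟩) hxA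
  · exact h.1 hin hyA

/-- Extending a local conglomerate by one suitable point. -/
lemma lc_insert {A : Set S} {x : S} (hA : LocalConglomerate F A)
    (ha : x ∉ FOutSet F A) (hb : x ∉ FInSet F A) (hc : ¬ F x x)
    (hd : ∀ y, F x y → ¬ IsSink F y → y ∈ FInSet F A) :
    LocalConglomerate F (insert x A) := by
  have hmono : FInSet F A ⊆ FInSet F (insert x A) := by
    intro z hz
    obtain ⟨w, hwA, hzw⟩ := mem_FInSet'.mp hz
    exact mem_FInSet'.mpr ⟨w, Set.mem_insert_of_mem x hwA, hzw⟩
  constructor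
  · intro z hz
    obtain ⟨w, hw, hzw⟩ := mem_FInSet'.mp hz
    simp only [Set.mem_compl_iff, Set.mem_insert_iff, not_or]
    rcases hw with rfl | hwA
    · constructor
      · rintro rfl; exact hc hzw
      · intro hzA; exact ha (mem_FOutSet'.mpr ⟨z, hzA, hzw⟩)
    · have hzc : z ∉ A := hA.1 (mem_FInSet'.mpr ⟨w, hwA, hzw⟩)
      refine ⟨?_, hzc⟩
      rintro rfl
      exact hb (mem_FInSet'.mpr ⟨w, hwA, hzw⟩)
  · rintro y ⟨hy, hyns⟩
    have hyns' : ¬ IsSink F y := by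
      intro h; exact hyns ⟨Set.mem_univ y, h⟩
    obtain ⟨w, hw, hwy⟩ := mem_FOutSet'.mp hy
    rcases hw with rfl | hwA
    · exact hmono (hd y hwy hyns')
    · exact hmono (hA.2 ⟨mem_FOutSet'.mpr ⟨w, hwA, hwy⟩, hyns⟩)

/-- A maximal local conglomerate gives a fixed point of φ. -/
lemma maxlc_fixed {A : Set S} (hA : LocalConglomerate F A)
    (hmax : ∀ B : Set S, LocalConglomerate F B → A ⊆ B → B ⊆ A) :
    phi F (A, FOutSet F A ∪ FInSet F A) = (A, FOutSet F A ∪ FInSet F A) := by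
  have hdisj := lc_disjoint hA
  have hdisj' : ∀ y ∈ A, y ∉ FOutSet F A ∪ FInSet F A := by
    intro y hyA hyN
    exact absurd (Set.mem_inter hyA hyN) (by rw [hdisj]; exact not_false)
  have h1 : sinks F A ∪ {x | FOut F x ≠ ∅ ∧ FOut F x ⊆ FOutSet F A ∪ FInSet F A} = A := by
    apply Set.Subset.antisymm
    · rintro x (hx | ⟨hne, hsub⟩)
      · exact hx.1
      · -- x with nonempty F→(x) ⊆ N must be in A, else insert x A is a bigger LC
        by_contra hxA
        have hxnotout : ∀ y, F x y → y ∈ FOutSet F A ∪ FInSet F A := fun y hy => hsub hy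
        -- x ∉ FInSet F A : else F→(x) ∩ A ≠ ∅, but F→(x) ⊆ N disjoint from A
        have hbin : x ∉ FInSet F A := by
          intro hxin
          obtain ⟨a, haA, hxa⟩ := mem_FInSet'.mp hxin
          exact hdisj' a haA (hxnotout a hxa)
        -- x ∉ FOutSet F A : x is a nonsink, so it would be in FInSet F A
        have haout : x ∉ FOutSet F A := by
          intro hxout
          have hxns : ¬ x ∈ sinks F Set.univ := by
            rintro ⟨-, hsink⟩
            exact hne hsink
          exact hbin (hA.2 ⟨hxout, hxns⟩)
        -- ¬ F x x : else x ∈ N, but then x ∈ FOutSet ∪ FInSet, contradiction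
        have hcc : ¬ F x x := by
          intro hxx
          rcases hxnotout x hxx with h | h
          · exact haout h
          · exact hbin h
        have hd : ∀ y, F x y → ¬ IsSink F y → y ∈ FInSet F A := by
          intro y hy hyns
          rcases hxnotout y hy with h | h
          · exact hA.2 ⟨h, fun hs => hyns hs.2⟩
          · exact h
        have hlc := lc_insert hA haout hbin hcc hd
        exact hxA (hmax _ hlc (Set.subset_insert x A) (Set.mem_insert x A))
    · intro x hxA
      by_cases hs : IsSink F x
      · exact Or.inl ⟨hxA, hs⟩
      · refine Or.inr ⟨by simpa [IsSink] using hs, ?_⟩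
        intro y hy
        exact Or.inl (mem_FOutSet'.mpr ⟨x, hxA, hy⟩)
  have h2 : sinks F (FOutSet F A ∪ FInSet F A) ∪ {x | FOut F x ∩ A ≠ ∅} =
      FOutSet F A ∪ FInSet F A := by
    apply Set.Subset.antisymm
    · rintro y (hy | hy)
      · exact hy.1
      · obtain ⟨z, hzy, hzA⟩ := Set.nonempty_iff_ne_empty.mpr hy
        exact Or.inr (mem_FInSet'.mpr ⟨z, hzA, hzy⟩)
    · intro y hy
      rcases hy with hout | hin
      · by_cases hs : IsSink F y
        · exact Or.inl ⟨Or.inl hout, hs⟩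
        · have : y ∈ FInSet F A := hA.2 ⟨hout, fun h => hs h.2⟩
          obtain ⟨a, haA, hya⟩ := mem_FInSet'.mp this
          exact Or.inr (Set.nonempty_iff_ne_empty.mp ⟨a, hya, haA⟩)
      · obtain ⟨a, haA, hya⟩ := mem_FInSet'.mp hin
        exact Or.inr (Set.nonempty_iff_ne_empty.mp ⟨a, hya, haA⟩)
  exact Prod.ext h1 h2

/-- The first component of a consistent fixed point of φ is a local conglomerate. -/
lemma fixed_consistent_lc {q : Set S × Set S} (hfix : phi F q = q)
    (hcons : q.1 ∩ q.2 = ∅) : LocalConglomerate F q.1 := by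
  have h1 : sinks F q.1 ∪ {x | FOut F x ≠ ∅ ∧ FOut F x ⊆ q.2} = q.1 :=
    congrArg Prod.fst hfix
  have h2 : sinks F q.2 ∪ {x | FOut F x ∩ q.1 ≠ ∅} = q.2 :=
    congrArg Prod.snd hfix
  have hdisj : ∀ y ∈ q.1, y ∉ q.2 := by
    intro y hy1 hy2
    exact absurd (Set.mem_inter hy1 hy2) (by rw [hcons]; exact not_false)
  have hin2 : ∀ y, y ∈ FInSet F q.1 → y ∈ q.2 := by
    intro y hy
    obtain ⟨a, haA, hya⟩ := mem_FInSet'.mp hy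
    rw [← h2]
    exact Or.inr (Set.nonempty_iff_ne_empty.mp ⟨a, hya, haA⟩)
  constructor
  · intro y hy
    exact fun hy1 => hdisj y hy1 (hin2 y hy)
  · rintro y ⟨hy, hyns⟩
    obtain ⟨x, hx1, hxy⟩ := mem_FOutSet'.mp hy
    have hyns' : ¬ IsSink F y := fun h => hyns ⟨Set.mem_univ y, h⟩
    -- x ∈ q.1 is a non-sink, so F→(x) ⊆ q.2
    have hx : x ∈ sinks F q.1 ∪ {x | FOut F x ≠ ∅ ∧ FOut F x ⊆ q.2} := by rw [h1]; exact hx1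
    have hy2 : y ∈ q.2 := by
      rcases hx with hs | ⟨-, hsub⟩
      · exact absurd hxy hs.2.not_rel
      · exact hsub hxy
    -- y ∈ q.2 nonsink, so F→(y) ∩ q.1 ≠ ∅
    have : y ∈ sinks F q.2 ∪ {x | FOut F x ∩ q.1 ≠ ∅} := by rw [h2]; exact hy2
    rcases this with hs | hne
    · exact absurd hs.2 hyns'
    · obtain ⟨z, hzy, hz1⟩ := Set.nonempty_iff_ne_empty.mpr hne
      exact mem_FInSet'.mpr ⟨z, hz1, hzy⟩

/-- Every local conglomerate extends to a maximal one (Zorn). -/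
lemma exists_maxlc {B : Set S} (hB : LocalConglomerate F B) :
    ∃ C, B ⊆ C ∧ LocalConglomerate F C ∧
      ∀ D : Set S, LocalConglomerate F D → C ⊆ D → D ⊆ C := by
  obtain ⟨m, hBm, hm⟩ := zorn_subset_nonempty {C : Set S | LocalConglomerate F C}
    (fun c hc hchain ⟨c0, hc0⟩ => by
      refine ⟨⋃₀ c, ?_, fun s hs => Set.subset_sUnion_of_mem hs⟩
      constructor
      · intro z hz
        obtain ⟨w, hw, hzw⟩ := mem_FInSet'.mp hz
        obtain ⟨Bi, hBi, hwBi⟩ := hw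
        intro hzU
        obtain ⟨Bj, hBj, hzBj⟩ := hzU
        rcases hchain.total hBi hBj with hij | hji
        · exact (hc hBj).1 (mem_FInSet'.mpr ⟨w, hij hwBi, hzw⟩) hzBj
        · exact (hc hBi).1 (mem_FInSet'.mpr ⟨w, hwBi, hzw⟩) (hji hzBj)
      · rintro y ⟨hy, hyns⟩
        obtain ⟨w, hw, hwy⟩ := mem_FOutSet'.mp hy
        obtain ⟨Bi, hBi, hwBi⟩ := hw
        have := (hc hBi).2 ⟨mem_FOutSet'.mpr ⟨w, hwBi, hwy⟩, hyns⟩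
        obtain ⟨a, haBi, hya⟩ := mem_FInSet'.mp this
        exact mem_FInSet'.mpr ⟨a, ⟨Bi, hBi, haBi⟩, hya⟩)
    B hB
  exact ⟨m, hBm, hm.1, fun D hD hmD => hm.2 hD hmD⟩

end Aux

/-- A is a maximal local conglomerate iff (A, F→(A) ∪ F←(A)) is a
consistent fixed point of φ, maximal w.r.t. ≤ among consistent fixed points. -/
theorem maximal_localConglomerate_iff_maximal_consistent_fixed_point
    (F : S → S → Prop) (A : Set S) :
    (LocalConglomerate F A ∧
      ∀ B : Set S, LocalConglomerate F B → A ⊆ B → B ⊆ A) ↔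
    (phi F (A, FOutSet F A ∪ FInSet F A) = (A, FOutSet F A ∪ FInSet F A) ∧
      A ∩ (FOutSet F A ∪ FInSet F A) = ∅ ∧
      ∀ q : Set S × Set S, phi F q = q → q.1 ∩ q.2 = ∅ →
        PairLe (A, FOutSet F A ∪ FInSet F A) q →
        PairLe q (A, FOutSet F A ∪ FInSet F A)) := by
  constructor
  · rintro ⟨hA, hmax⟩
    refine ⟨maxlc_fixed hA hmax, lc_disjoint hA, ?_⟩
    rintro q hfix hcons ⟨hle1, hle2⟩
    have hq1 : q.1 ⊆ A := hmax q.1 (fixed_consistent_lc hfix hcons) hle1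
    refine ⟨hq1, ?_⟩
    intro y hy2
    have h2 : sinks F q.2 ∪ {x | FOut F x ∩ q.1 ≠ ∅} = q.2 := congrArg Prod.snd hfix
    have : y ∈ sinks F q.2 ∪ {x | FOut F x ∩ q.1 ≠ ∅} := by rw [h2]; exact hy2
    rcases this with hs | hne
    · -- y is a sink in q.2; show y ∈ FOutSet F A ∪ FInSet F A
      by_contra hyN
      have hyout : y ∉ FOutSet F A := fun h => hyN (Or.inl h)
      have hyin : y ∉ FInSet F A := by
        intro h
        obtain ⟨a, -, hya⟩ := mem_FInSet'.mp h
        exact hs.2.not_rel hya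
      have hyy : ¬ F y y := hs.2.not_rel
      have hd : ∀ z, F y z → ¬ IsSink F z → z ∈ FInSet F A := by
        intro z hz _
        exact absurd hz hs.2.not_rel
      have hlc := lc_insert hA hyout hyin hyy hd
      have hyA : y ∈ A := hmax _ hlc (Set.subset_insert y A) (Set.mem_insert y A)
      have : y ∈ q.1 ∩ q.2 := ⟨hle1 hyA, hy2⟩
      rw [hcons] at this
      exact this
    · obtain ⟨z, hzy, hz1⟩ := Set.nonempty_iff_ne_empty.mpr hne
      exact Or.inr (mem_FInSet'.mpr ⟨z, hq1 hz1, hzy⟩)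
  · rintro ⟨hfix, hcons, hqmax⟩
    have hA : LocalConglomerate F A :=
      fixed_consistent_lc (q := (A, FOutSet F A ∪ FInSet F A)) hfix hcons
    refine ⟨hA, ?_⟩
    intro B hB hAB
    obtain ⟨C, hBC, hC, hCmax⟩ := exists_maxlc hB
    have hAC : A ⊆ C := hAB.trans hBC
    have hNle : FOutSet F A ∪ FInSet F A ⊆ FOutSet F C ∪ FInSet F C := by
      rintro y (hy | hy)
      · obtain ⟨x, hx, hxy⟩ := mem_FOutSet'.mp hy
        exact Or.inl (mem_FOutSet'.mpr ⟨x, hAC hx, hxy⟩)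
      · obtain ⟨x, hx, hxy⟩ := mem_FInSet'.mp hy
        exact Or.inr (mem_FInSet'.mpr ⟨x, hAC hx, hxy⟩)
    have := hqmax (C, FOutSet F C ∪ FInSet F C) (maxlc_fixed hC hCmax)
      (lc_disjoint hC) ⟨hAC, hNle⟩
    exact hBC.trans this.1
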